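/- arXiv:1102.5240 — 8 statements merged into one kernel-verified Lean document; each statement's English description precedes it below -/
import Mathlib

section
/- Let V be a finite-dimensional vector space of dimension n ≥ 2 over ℝ, Z a symmetric bilinear form on V, and η a linear functional on V such that η(j)·Z(k,l) = η(l)·Z(k,j) for all j,k,l. If Z is non-degenerate, then η = 0. -/
/-- Proposition 2.1: if the symmetric bilinear form `Z` is non-degenerate and
`η j * Z k l = η l * Z k j` for all vectors, then `η = 0`. -/
theorem stmt_0 {V : Type*} [AddCommGroup V] [Module ℝ V] [FiniteDimensional ℝ V]
    {n : ℕ} (hn : 2 ≤ n) (hdim : Module.finrank ℝ V = n)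
    (Z : V →ₗ[ℝ] V →ₗ[ℝ] ℝ) (hZsym : ∀ x y, Z x y = Z y x)
    (η : V →ₗ[ℝ] ℝ)
    (hrel : ∀ j k l, η j * Z k l = η l * Z k j)
    (hnd : ∀ v, (∀ w, Z v w = 0) → v = 0) :
    η = 0 := by
  by_contra hη
  -- pick x with η x ≠ 0
  obtain ⟨x, hx⟩ : ∃ x, η x ≠ 0 := by
    by_contra h
    push_neg at h
    exact hη (LinearMap.ext fun v => h v)
  -- ker η is nontrivial since dim ≥ 2
  have hker : LinearMap.ker η ≠ ⊥ := by
    intro hbot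
    have hinj : Function.Injective η := LinearMap.ker_eq_bot.mp hbot
    have h1 : Module.finrank ℝ V ≤ Module.finrank ℝ ℝ :=
      LinearMap.finrank_le_finrank_of_injective hinj
    simp [hdim] at h1
    omega
  obtain ⟨v, hv, hv0⟩ := Submodule.exists_mem_ne_zero_of_ne_bot hker
  have hηv : η v = 0 := hv
  -- Z k v = 0 for all k
  have hZv : ∀ k, Z v k = 0 := by
    intro k
    have := hrel x k v
    rw [hηv, zero_mul] at this
    have h2 : Z k v = 0 := by
      rcases mul_eq_zero.mp this.symm.symm with h | h
      · exact absurd h hx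
      · exact h
    rw [hZsym]; exact h2
  exact hv0 (hnd v hZv)
end

section
/- Let (V, g) be an n-dimensional real inner product space (n ≥ 2), Z a symmetric bilinear form on V with trace (with respect to g) equal to a scalar s ≠ 0, and η a nonzero vector in V such that g(η,j)·Z(k,l) = g(η,l)·Z(k,j) for all j,k,l ∈ V. Then Z(i,j) = s·g(η,i)·g(η,j)/g(η,η) for all i,j; in particular Z has rank one. -/
open scoped RealInnerProductSpace

/-- Proposition 2.2: if `η ≠ 0`, the trace `s` of the symmetric bilinear form `Z`
is nonzero, and `g(η,j)·Z(k,l) = g(η,l)·Z(k,j)` for all vectors, then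
`Z` is the rank-one form `Z(i,j) = s·g(η,i)·g(η,j)/g(η,η)`. -/
theorem stmt_1 {V : Type*} [NormedAddCommGroup V] [InnerProductSpace ℝ V]
    [FiniteDimensional ℝ V]
    {n : ℕ} (hn : 2 ≤ n) (hdim : Module.finrank ℝ V = n)
    (Z : V →ₗ[ℝ] V →ₗ[ℝ] ℝ) (hZsym : ∀ x y, Z x y = Z y x)
    (b : OrthonormalBasis (Fin n) ℝ V)
    (s : ℝ) (hs : ∑ i, Z (b i) (b i) = s) (hs0 : s ≠ 0)
    (η : V) (hη : η ≠ 0)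
    (hrel : ∀ j k l, ⟪η, j⟫ * Z k l = ⟪η, l⟫ * Z k j) :
    ∀ i j, Z i j = s * ⟪η, i⟫ * ⟪η, j⟫ / ⟪η, η⟫ := by
  have hηη : (⟪η, η⟫ : ℝ) ≠ 0 := by
    simpa using inner_self_ne_zero (𝕜 := ℝ) (x := η) |>.mpr hη
  -- key: ⟪η,η⟫ * Z k j = ⟪η,j⟫ * Z k η
  have key : ∀ k j : V, ⟪η, η⟫ * Z k j = ⟪η, j⟫ * Z k η := fun k j =>
    (hrel j k η).symm
  -- rank-one form with c = Z η η
  have key2 : ∀ k j : V, ⟪η, η⟫ * ⟪η, η⟫ * Z k j = ⟪η, k⟫ * ⟪η, j⟫ * Z η η := by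
    intro k j
    have h1 := key k j
    have h2 := key η k
    have h3 : Z k η = Z η k := hZsym k η
    linear_combination (⟪η, η⟫ : ℝ) * h1 + ⟪η, j⟫ * h2 + (⟪η, η⟫ * ⟪η, j⟫) * h3
  -- Parseval
  have hpar : ∑ i, ⟪η, b i⟫ * ⟪η, b i⟫ = ⟪η, η⟫ := by
    have := b.sum_inner_mul_inner η η
    simpa [real_inner_comm] using this
  have htr : ⟪η, η⟫ * ⟪η, η⟫ * s = ⟪η, η⟫ * Z η η := by
    calc ⟪η, η⟫ * ⟪η, η⟫ * s = ∑ i, ⟪η, η⟫ * ⟪η, η⟫ * Z (b i) (b i) := by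
          rw [← hs, Finset.mul_sum]
      _ = ∑ i, ⟪η, b i⟫ * ⟪η, b i⟫ * Z η η := by
          exact Finset.sum_congr rfl fun i _ => key2 (b i) (b i)
      _ = ⟪η, η⟫ * Z η η := by rw [← Finset.sum_mul, hpar]
  have hZηη : Z η η = ⟪η, η⟫ * s := by
    have := mul_left_cancel₀ hηη (show ⟪η, η⟫ * Z η η = ⟪η, η⟫ * (⟪η, η⟫ * s) by
      linear_combination -htr)
    linarith
  intro i j
  have := key2 i j
  rw [hZηη] at this
  have h4 := mul_left_cancel₀ hηη (show ⟪η, η⟫ * (⟪η, η⟫ * Z i j) = ⟪η, η⟫ * (s * ⟪η, i⟫ * ⟪η, j⟫) by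
    linear_combination this)
  field_simp
  linarith
end

section
/- Let (V, g) be an n-dimensional real inner product space (n ≥ 2), φ, s real scalars with s ≠ 0, Ric a symmetric bilinear form on V, and set Z(i,j) = Ric(i,j) + φ·g(i,j). Suppose η ∈ V is nonzero and g(η,j)·Z(k,l) = g(η,l)·Z(k,j) for all j,k,l, and that the g-trace of Z equals s. Then Ric(i,j) = −φ·g(i,j) + s·T(i)·T(j) where T = η/‖η‖, i.e. Ric is of quasi-Einstein form. -/
/-!
Taking `j = η` in the relation shows that every row `Z k ·` is a multiple of `⟪η, ·⟫`; with the
symmetry of `Z` this forces `Z = c • (η ⊗ η)`. Parseval's identity turns the trace condition into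
`c * ‖η‖ ^ 2 = s`, which is the quasi-Einstein form after subtracting `φ • g`.
-/

open scoped RealInnerProductSpace

section RankOne

variable {V : Type*} [NormedAddCommGroup V] [InnerProductSpace ℝ V] {Z : V → V → ℝ} {η : V}

theorem norm_sq_mul_eq_inner_mul_of_inner_mul_comm
    (hrel : ∀ j k l, ⟪η, j⟫ * Z k l = ⟪η, l⟫ * Z k j) (k l : V) :
    ‖η‖ ^ 2 * Z k l = ⟪η, l⟫ * Z k η := by
  rw [← real_inner_self_eq_norm_sq]
  exact hrel η k l

theorem eq_mul_inner_mul_inner_of_inner_mul_comm (hsymm : ∀ x y, Z x y = Z y x)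
    (hη : η ≠ 0) (hrel : ∀ j k l, ⟪η, j⟫ * Z k l = ⟪η, l⟫ * Z k j) (k l : V) :
    Z k l = Z η η / ‖η‖ ^ 4 * (⟪η, k⟫ * ⟪η, l⟫) := by
  have hnorm : ‖η‖ ≠ 0 := norm_ne_zero_iff.mpr hη
  have hkl := norm_sq_mul_eq_inner_mul_of_inner_mul_comm hrel k l
  have hηk := norm_sq_mul_eq_inner_mul_of_inner_mul_comm hrel η k
  rw [hsymm k η] at hkl
  field_simp
  linear_combination ‖η‖ ^ 2 * hkl + ⟪η, l⟫ * hηk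

theorem OrthonormalBasis.sum_apply_self_of_eq_mul_inner_mul_inner {ι : Type*} [Fintype ι]
    (b : OrthonormalBasis ι ℝ V) {c : ℝ} (hZ : ∀ k l, Z k l = c * (⟪η, k⟫ * ⟪η, l⟫)) :
    ∑ i, Z (b i) (b i) = c * ‖η‖ ^ 2 := by
  simp_rw [hZ, ← Finset.mul_sum, ← real_inner_self_eq_norm_sq, ← b.sum_inner_mul_inner η η,
    real_inner_comm η (b _)]

end RankOne

theorem stmt_2_general {V : Type*} [NormedAddCommGroup V] [InnerProductSpace ℝ V]
    {n : ℕ}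
    (φ s : ℝ)
    (Ric : V →ₗ[ℝ] V →ₗ[ℝ] ℝ) (hRicsym : ∀ x y, Ric x y = Ric y x)
    (Z : V → V → ℝ) (hZ : ∀ i j, Z i j = Ric i j + φ * ⟪i, j⟫)
    (η : V) (hη : η ≠ 0)
    (hrel : ∀ j k l, ⟪η, j⟫ * Z k l = ⟪η, l⟫ * Z k j)
    (b : OrthonormalBasis (Fin n) ℝ V)
    (hs : ∑ i, Z (b i) (b i) = s) :
    ∀ i j, Ric i j = -φ * ⟪i, j⟫ + s * (⟪η, i⟫ / ‖η‖) * (⟪η, j⟫ / ‖η‖) := by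
  have hZsymm : ∀ x y, Z x y = Z y x := fun x y => by rw [hZ, hZ, hRicsym, real_inner_comm]
  set c := Z η η / ‖η‖ ^ 4
  have hrankone : ∀ k l, Z k l = c * (⟪η, k⟫ * ⟪η, l⟫) :=
    eq_mul_inner_mul_inner_of_inner_mul_comm hZsymm hη hrel
  have htrace : c * ‖η‖ ^ 2 = s := hs ▸ (b.sum_apply_self_of_eq_mul_inner_mul_inner hrankone).symm
  have hnorm : ‖η‖ ≠ 0 := norm_ne_zero_iff.mpr hη
  clear_value c
  intro i j
  rw [← htrace]
  field_simp
  linear_combination (hZ i j).symm.trans (hrankone i j)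

/-- Proposition 2.3: with `Z = Ric + φ·g`, `η ≠ 0` satisfying
`g(η,j)·Z(k,l) = g(η,l)·Z(k,j)` and trace of `Z` equal to `s ≠ 0`,
the Ricci form is quasi-Einstein: `Ric(i,j) = −φ·g(i,j) + s·T(i)·T(j)`
with `T = η/‖η‖`. -/
theorem stmt_2 {V : Type*} [NormedAddCommGroup V] [InnerProductSpace ℝ V]
    [FiniteDimensional ℝ V]
    {n : ℕ} (hn : 2 ≤ n) (hdim : Module.finrank ℝ V = n)
    (φ s : ℝ) (hs0 : s ≠ 0)
    (Ric : V →ₗ[ℝ] V →ₗ[ℝ] ℝ) (hRicsym : ∀ x y, Ric x y = Ric y x)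
    (Z : V → V → ℝ) (hZ : ∀ i j, Z i j = Ric i j + φ * ⟪i, j⟫)
    (η : V) (hη : η ≠ 0)
    (hrel : ∀ j k l, ⟪η, j⟫ * Z k l = ⟪η, l⟫ * Z k j)
    (b : OrthonormalBasis (Fin n) ℝ V)
    (hs : ∑ i, Z (b i) (b i) = s) :
    ∀ i j, Ric i j = -φ * ⟪i, j⟫ + s * (⟪η, i⟫ / ‖η‖) * (⟪η, j⟫ / ‖η‖) :=
  stmt_2_general φ s Ric hRicsym Z hZ η hη hrel b hs
end

section
/- Let V be an n-dimensional real vector space (n ≥ 3), Z a symmetric non-degenerate bilinear form on V, and ω a linear functional. Suppose the alternating 2-form F satisfies F(i,k)·Z(j,l) + F(j,i)·Z(k,l) + F(k,j)·Z(i,l) = 0 for all i,j,k,l ∈ V. Then F = 0. -/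
/-- Algebraic core of Theorem 4.1: if `Z` is a non-degenerate symmetric bilinear
form, `F` is alternating, and the cyclic identity
`F(i,k)Z(j,l) + F(j,i)Z(k,l) + F(k,j)Z(i,l) = 0` holds, then `F = 0`. -/
theorem stmt_3 {V : Type*} [AddCommGroup V] [Module ℝ V] [FiniteDimensional ℝ V]
    {n : ℕ} (hn : 3 ≤ n) (hdim : Module.finrank ℝ V = n)
    (Z : V →ₗ[ℝ] V →ₗ[ℝ] ℝ) (hZsym : ∀ x y, Z x y = Z y x)
    (hnd : ∀ v, (∀ w, Z v w = 0) → v = 0)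
    (F : V →ₗ[ℝ] V →ₗ[ℝ] ℝ) (hFalt : ∀ x y, F x y = -F y x)
    (hcyc : ∀ i j k l, F i k * Z j l + F j i * Z k l + F k j * Z i l = 0) :
    F = 0 := by
  have hvec : ∀ i j k : V, F i k • j + F j i • k + F k j • i = 0 := by
    intro i j k
    apply hnd
    intro l
    have := hcyc i j k l
    simp only [map_add, map_smul, LinearMap.add_apply, LinearMap.smul_apply,
      smul_eq_mul]
    linarith
  have hF : ∀ i k : V, F i k = 0 := by
    intro i k
    classical
    by_contra hne
    have hspan : ∀ j : V, j ∈ Submodule.span ℝ ({i, k} : Set V) := by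
      intro j
      classical
      have h := hvec i j k
      have hj : j = (F i k)⁻¹ • (-(F j i • k) - F k j • i) := by
        have : F i k • j = -(F j i • k) - F k j • i := by
          linear_combination (norm := module) h
        rw [← this, smul_smul, inv_mul_cancel₀ hne, one_smul]
      rw [hj]
      have hi : i ∈ Submodule.span ℝ ({i, k} : Set V) :=
        Submodule.subset_span (by simp)
      have hk : k ∈ Submodule.span ℝ ({i, k} : Set V) :=
        Submodule.subset_span (by simp)
      exact Submodule.smul_mem _ _ (Submodule.sub_mem _ (Submodule.neg_mem _
        (Submodule.smul_mem _ _ hk)) (Submodule.smul_mem _ _ hi))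
    have htop : (⊤ : Submodule ℝ V) = Submodule.span ℝ ({i, k} : Set V) := by
      apply le_antisymm
      · intro x _; exact hspan x
      · exact le_top
    have hle : Module.finrank ℝ V ≤ 2 := by
      have h1 : Module.finrank ℝ V =
          Module.finrank ℝ (Submodule.span ℝ ({i, k} : Set V)) := by
        rw [← finrank_top ℝ V, htop]
      have h2 : Module.finrank ℝ (Submodule.span ℝ ({i, k} : Set V)) ≤
          ({i, k} : Set V).toFinset.card := finrank_span_le_card _
      have h3 : ({i, k} : Set V).toFinset.card ≤ 2 := by
        rw [Set.toFinset_insert, Set.toFinset_singleton]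
        exact (Finset.card_insert_le _ _).trans (by simp)
      omega
    omega
  ext i k
  simp [hF]
end

section
/- Let (V, g) be an n-dimensional real inner product space (n ≥ 3), Z a symmetric bilinear form on V, ω a nonzero vector in V, and h a vector in V. Suppose g(ω,k)·Z(j,l) − g(ω,j)·Z(k,l) = (1/(2(n−1)))·(g(j,l)·g(h,k) − g(k,l)·g(h,j)) for all j,k,l ∈ V. Then ω is an eigenvector of Z, i.e. there is a scalar ζ with Z(ω, l) = ζ·g(ω, l) for all l ∈ V. -/
open scoped RealInnerProductSpace

/-- Theorem 5.1 (pointwise form): if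
`g(ω,k)·Z(j,l) − g(ω,j)·Z(k,l) = (1/(2(n−1)))·(g(j,l)·g(h,k) − g(k,l)·g(h,j))`
for all vectors, then `ω` is an eigenvector of the symmetric bilinear form `Z`. -/
theorem stmt_5 {V : Type*} [NormedAddCommGroup V] [InnerProductSpace ℝ V]
    [FiniteDimensional ℝ V]
    {n : ℕ} (hn : 3 ≤ n) (hdim : Module.finrank ℝ V = n)
    (Z : V →ₗ[ℝ] V →ₗ[ℝ] ℝ) (hZsym : ∀ x y, Z x y = Z y x)
    (ω : V) (hω : ω ≠ 0) (h : V)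
    (hrel : ∀ j k l, ⟪ω, k⟫ * Z j l - ⟪ω, j⟫ * Z k l
      = (1 / (2 * ((n : ℝ) - 1))) * (⟪j, l⟫ * ⟪h, k⟫ - ⟪k, l⟫ * ⟪h, j⟫)) :
    ∃ ζ : ℝ, ∀ l, Z ω l = ζ * ⟪ω, l⟫ := by
  have hn3 : (3 : ℝ) ≤ (n : ℝ) := by exact_mod_cast hn
  set c : ℝ := 1 / (2 * ((n : ℝ) - 1)) with hc
  have hn1 : (n : ℝ) - 1 ≠ 0 := by linarith
  have hcpos : 0 < c := by
    rw [hc]; exact div_pos one_pos (by linarith)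
  have hclt : c < 1 / 2 := by
    rw [hc]
    rw [div_lt_div_iff₀ (by linarith) (by norm_num)]
    linarith
  have hww : ⟪ω, ω⟫ ≠ 0 := inner_self_ne_zero.mpr hω
  -- Step B: pointwise identity from the hypothesis plus symmetry of Z
  have hB : ∀ l, ⟪ω, ω⟫ * Z ω l
      = Z ω ω * ⟪ω, l⟫ - c * ⟪ω, ω⟫ * ⟪h, l⟫ + c * ⟪ω, l⟫ * ⟪h, ω⟫ := by
    intro l
    have e := hrel ω l ω
    rw [hZsym l ω] at e
    linear_combination -e - c * ⟪h, ω⟫ * real_inner_comm l ω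
  -- Step A: trace of the hypothesis
  set b := stdOrthonormalBasis ℝ V with hb
  set T : ℝ := ∑ i, Z (b i) (b i) with hT
  have hA : ∀ j, Z ω j = T * ⟪ω, j⟫ - (1 / 2) * ⟪h, j⟫ := by
    intro j
    have hsum : ∑ i, (⟪ω, b i⟫ * Z j (b i) - ⟪ω, j⟫ * Z (b i) (b i))
        = ∑ i, c * (⟪j, b i⟫ * ⟪h, b i⟫ - ⟪b i, b i⟫ * ⟪h, j⟫) :=
      Finset.sum_congr rfl fun i _ => hrel j (b i) (b i)
    have h1 : ∑ i, ⟪ω, b i⟫ * Z j (b i) = Z j ω := by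
      conv_rhs => rw [← b.sum_repr' ω]
      rw [map_sum]
      refine Finset.sum_congr rfl fun i _ => ?_
      rw [map_smul, real_inner_comm ω (b i)]
      simp [mul_comm]
    have h2 : ∑ i, ⟪j, b i⟫ * ⟪h, b i⟫ = ⟪j, h⟫ := by
      have := b.sum_inner_mul_inner j h
      simpa [real_inner_comm] using this
    have h3 : ∑ i, ⟪b i, (b i : V)⟫ = (n : ℝ) := by
      have hone : ∀ i, ⟪b i, (b i : V)⟫ = (1 : ℝ) := fun i => by
        have := b.orthonormal.1 i
        rw [real_inner_self_eq_norm_sq, this]; norm_num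
      simp [hone, Finset.card_univ, hdim]
    have hlhs : ∑ i, (⟪ω, b i⟫ * Z j (b i) - ⟪ω, j⟫ * Z (b i) (b i))
        = Z j ω - ⟪ω, j⟫ * T := by
      rw [Finset.sum_sub_distrib, h1, ← Finset.mul_sum, hT]
    have hrhs : ∑ i, c * (⟪j, b i⟫ * ⟪h, b i⟫ - ⟪b i, b i⟫ * ⟪h, j⟫)
        = c * (⟪j, h⟫ - (n : ℝ) * ⟪h, j⟫) := by
      rw [← Finset.mul_sum, Finset.sum_sub_distrib, h2, ← Finset.sum_mul, h3]
    rw [hlhs, hrhs] at hsum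
    have hcn : c * ((n : ℝ) - 1) = 1 / 2 := by
      rw [hc]; field_simp
    have hjh : ⟪j, h⟫ = ⟪h, j⟫ := real_inner_comm h j
    rw [hZsym j ω] at hsum
    linear_combination hsum + c * hjh - ⟪h, j⟫ * hcn
  -- Step combine: h is parallel to ω
  set μ : ℝ := (⟪ω, ω⟫ * T - Z ω ω - c * ⟪h, ω⟫) / (⟪ω, ω⟫ * (1 / 2 - c)) with hμ
  have hD : ⟪ω, ω⟫ * (1 / 2 - c) ≠ 0 := by
    apply mul_ne_zero hww; linarith
  have hpar : ∀ l, ⟪h, l⟫ = μ * ⟪ω, l⟫ := by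
    intro l
    have e1 := hA l
    have e2 := hB l
    have key : ⟪ω, ω⟫ * (1 / 2 - c) * ⟪h, l⟫
        = (⟪ω, ω⟫ * T - Z ω ω - c * ⟪h, ω⟫) * ⟪ω, l⟫ := by
      linear_combination ⟪ω, ω⟫ * e1 - e2
    rw [hμ, div_mul_eq_mul_div, eq_div_iff hD]
    linear_combination key
  refine ⟨T - (1 / 2) * μ, fun l => ?_⟩
  rw [hA l, hpar l]
  ring
end

section
/- Let (V, g) be an n-dimensional real inner product space (n ≥ 3), Z a symmetric bilinear form with g-trace s, ω ∈ V nonzero, and suppose g(ω,k)·Z(j,l) − g(ω,j)·Z(k,l) = (1/(n−1))·[(g(ω,k)·s − Z(ω,k))·g(j,l) − (g(ω,j)·s − Z(ω,j))·g(k,l)] for all j,k,l, where Z(ω,x) denotes the bilinear form applied to ω and x. Then, with ζ defined by Z(ω,ω) = ζ·g(ω,ω), one has Z(k,l) = ((s−ζ)/(n−1))·g(k,l) + ((nζ−s)/(n−1))·g(ω,k)·g(ω,l)/g(ω,ω) for all k,l. -/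
open scoped RealInnerProductSpace

/-!
With `k = l = ω` the relation reduces, after cancelling `⟪ω, ω⟫`, to
`(n - 2) (Z ω j - ζ ⟪ω, j⟫) = 0`, so `ω` is an eigenvector of `Z` with eigenvalue `ζ`.
Substituting `Z ω · = ζ ⟪ω, ·⟫` into the relation with `j = ω` leaves an equation that is linear
in `Z k l` with nonzero coefficient `⟪ω, ω⟫`; solving it gives the quasi-Einstein form.
-/

section QuasiEinstein

variable {V : Type*} [NormedAddCommGroup V] [InnerProductSpace ℝ V]
  {Z : V →ₗ[ℝ] V →ₗ[ℝ] ℝ} {m s ζ : ℝ} {ω : V}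

theorem apply_left_eq_mul_inner_of_rel (hZsym : ∀ x y, Z x y = Z y x) (hm1 : m - 1 ≠ 0)
    (hm2 : m - 2 ≠ 0)
    (hrel : ∀ j k l, ⟪ω, k⟫ * Z j l - ⟪ω, j⟫ * Z k l
      = (1 / (m - 1)) * ((⟪ω, k⟫ * s - Z ω k) * ⟪j, l⟫ - (⟪ω, j⟫ * s - Z ω j) * ⟪k, l⟫))
    (hω : ω ≠ 0) (hζ : Z ω ω = ζ * ⟪ω, ω⟫) (j : V) :
    Z ω j = ζ * ⟪ω, j⟫ := by
  have hωω : ⟪ω, ω⟫ ≠ 0 := inner_self_ne_zero.mpr hω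
  have h := hrel j ω ω
  rw [hζ, hZsym j ω, real_inner_comm ω j] at h
  field_simp at h
  have hfactor : (m - 2) * (Z ω j - ζ * ⟪ω, j⟫) = 0 := by
    linear_combination h
  linear_combination (mul_eq_zero.mp hfactor).resolve_left hm2

theorem apply_eq_quasiEinstein_of_rel (hm : m - 1 ≠ 0)
    (hrel : ∀ j k l, ⟪ω, k⟫ * Z j l - ⟪ω, j⟫ * Z k l
      = (1 / (m - 1)) * ((⟪ω, k⟫ * s - Z ω k) * ⟪j, l⟫ - (⟪ω, j⟫ * s - Z ω j) * ⟪k, l⟫))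
    (hω : ω ≠ 0) (heig : ∀ j, Z ω j = ζ * ⟪ω, j⟫) (k l : V) :
    Z k l = ((s - ζ) / (m - 1)) * ⟪k, l⟫ + ((m * ζ - s) / (m - 1)) * (⟪ω, k⟫ * ⟪ω, l⟫ / ⟪ω, ω⟫) := by
  have hωω : ⟪ω, ω⟫ ≠ 0 := inner_self_ne_zero.mpr hω
  have h := hrel ω k l
  rw [heig l, heig k, heig ω] at h
  field_simp at h ⊢
  linear_combination -h

end QuasiEinstein

theorem stmt_6_general {V : Type*} [NormedAddCommGroup V] [InnerProductSpace ℝ V]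
    {n : ℕ} (hn : 3 ≤ n)
    (Z : V →ₗ[ℝ] V →ₗ[ℝ] ℝ) (hZsym : ∀ x y, Z x y = Z y x)
    (s : ℝ)
    (ω : V) (hω : ω ≠ 0)
    (hrel : ∀ j k l, ⟪ω, k⟫ * Z j l - ⟪ω, j⟫ * Z k l
      = (1 / ((n : ℝ) - 1)) *
        ((⟪ω, k⟫ * s - Z ω k) * ⟪j, l⟫ - (⟪ω, j⟫ * s - Z ω j) * ⟪k, l⟫))
    (ζ : ℝ) (hζ : Z ω ω = ζ * ⟪ω, ω⟫) :
    ∀ k l, Z k l = ((s - ζ) / ((n : ℝ) - 1)) * ⟪k, l⟫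
      + (((n : ℝ) * ζ - s) / ((n : ℝ) - 1)) * (⟪ω, k⟫ * ⟪ω, l⟫ / ⟪ω, ω⟫) := by
  have hn' : (3 : ℝ) ≤ n := by exact_mod_cast hn
  have heig := apply_left_eq_mul_inner_of_rel hZsym (by linarith) (by linarith) hrel hω hζ
  exact apply_eq_quasiEinstein_of_rel (by linarith) hrel hω heig

/-- Theorem 5.2(1) (pointwise form): from equation (5.1) with the gradient term
eliminated by its trace, the symmetric bilinear form `Z` has the quasi-Einstein
structure `Z(k,l) = ((s−ζ)/(n−1))·g(k,l) + ((nζ−s)/(n−1))·g(ω,k)g(ω,l)/g(ω,ω)`. -/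
theorem stmt_6 {V : Type*} [NormedAddCommGroup V] [InnerProductSpace ℝ V]
    [FiniteDimensional ℝ V]
    {n : ℕ} (hn : 3 ≤ n) (hdim : Module.finrank ℝ V = n)
    (Z : V →ₗ[ℝ] V →ₗ[ℝ] ℝ) (hZsym : ∀ x y, Z x y = Z y x)
    (b : OrthonormalBasis (Fin n) ℝ V)
    (s : ℝ) (hs : ∑ i, Z (b i) (b i) = s)
    (ω : V) (hω : ω ≠ 0)
    (hrel : ∀ j k l, ⟪ω, k⟫ * Z j l - ⟪ω, j⟫ * Z k l
      = (1 / ((n : ℝ) - 1)) *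
        ((⟪ω, k⟫ * s - Z ω k) * ⟪j, l⟫ - (⟪ω, j⟫ * s - Z ω j) * ⟪k, l⟫))
    (ζ : ℝ) (hζ : Z ω ω = ζ * ⟪ω, ω⟫) :
    ∀ k l, Z k l = ((s - ζ) / ((n : ℝ) - 1)) * ⟪k, l⟫
      + (((n : ℝ) * ζ - s) / ((n : ℝ) - 1)) * (⟪ω, k⟫ * ⟪ω, l⟫ / ⟪ω, ω⟫) :=
  stmt_6_general hn Z hZsym s ω hω hrel ζ hζ
end

section
/- Let (M,g) be a Riemannian manifold of dimension n with a symmetric (0,2)-tensor Z satisfying the Codazzi condition ∇_k Z_{jl} = ∇_j Z_{kl}, where Z_{jl} = R_{jl} + φ g_{jl} for a smooth function φ. Then ∇_k R_{jl} − ∇_j R_{kl} = (1/(2(n−1)))·(g_{jl} ∇_k R − g_{kl} ∇_j R), i.e. M is nearly conformally symmetric. -/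
/-- Item 3 of Section 1: if `Z = Ric + φ·g` is a Codazzi tensor, then the
manifold is nearly conformally symmetric:
`∇_k R_{jl} − ∇_j R_{kl} = (1/(2(n−1)))(g_{jl}∇_k R − g_{kl}∇_j R)`.
Tensor components at a point; the trace identities of Riemannian geometry
(trace of `∇Ric` and the contracted second Bianchi identity) are hypotheses. -/
theorem stmt_8 {n : ℕ} (hn : 2 ≤ n)
    (g ginv : Fin n → Fin n → ℝ)
    (hgsym : ∀ i j, g i j = g j i) (hginvsym : ∀ i j, ginv i j = ginv j i)
    (hdelta : ∀ i k, ∑ j, ginv i j * g j k = if i = k then (1 : ℝ) else 0)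
    (Ric : Fin n → Fin n → ℝ) (hRicsym : ∀ i j, Ric i j = Ric j i)
    (dRic : Fin n → Fin n → Fin n → ℝ)
    (hdRicsym : ∀ k j l, dRic k j l = dRic k l j)
    (dR : Fin n → ℝ) (φ : ℝ) (dφ : Fin n → ℝ)
    (htrace : ∀ k, ∑ j, ∑ l, ginv j l * dRic k j l = dR k)
    (hbianchi : ∀ k, ∑ j, ∑ l, ginv j l * dRic j k l = dR k / 2)
    (hcodazzi : ∀ k j l, dRic k j l + dφ k * g j l = dRic j k l + dφ j * g k l) :
    ∀ k j l, dRic k j l - dRic j k l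
      = (1 / (2 * ((n : ℝ) - 1))) * (g j l * dR k - g k l * dR j) := by
  have hne : ((n : ℝ) - 1) ≠ 0 := by
    have : (2 : ℝ) ≤ (n : ℝ) := by exact_mod_cast hn
    linarith
  -- ∑_{j,l} ginv j l * g j l = n
  have hgg : ∑ j : Fin n, ∑ l, ginv j l * g j l = (n : ℝ) := by
    have : ∀ j : Fin n, ∑ l, ginv j l * g j l = 1 := by
      intro j
      have h := hdelta j j
      simp only [if_pos] at h
      rw [← h]
      exact Finset.sum_congr rfl fun l _ => by rw [hgsym]
    simp [this]
  -- ∑_l ginv j l * g k l = δ_{jk}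
  have hdel2 : ∀ j k : Fin n, ∑ l, ginv j l * g k l = if j = k then (1:ℝ) else 0 := by
    intro j k
    rw [← hdelta j k]
    exact Finset.sum_congr rfl fun l _ => by rw [hgsym]
  have hφ : ∀ k, dφ k = - dR k / (2 * ((n : ℝ) - 1)) := by
    intro k
    have key : dR k / 2 = dR k + dφ k * (n : ℝ) - dφ k := by
      have h1 : ∑ j : Fin n, ∑ l, ginv j l * dRic j k l
          = ∑ j : Fin n, ∑ l, ginv j l * (dRic k j l + dφ k * g j l - dφ j * g k l) := by
        refine Finset.sum_congr rfl fun j _ => Finset.sum_congr rfl fun l _ => ?_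
        have e : dRic j k l = dRic k j l + dφ k * g j l - dφ j * g k l := by
          have := hcodazzi k j l; linarith
        rw [e]
      rw [hbianchi k] at h1
      have h2 : ∑ j : Fin n, ∑ l, ginv j l * (dRic k j l + dφ k * g j l - dφ j * g k l)
          = (∑ j : Fin n, ∑ l, ginv j l * dRic k j l)
            + dφ k * (∑ j : Fin n, ∑ l, ginv j l * g j l)
            - ∑ j : Fin n, dφ j * (∑ l, ginv j l * g k l) := by
        simp only [Finset.mul_sum, ← Finset.sum_add_distrib, ← Finset.sum_sub_distrib]
        exact Finset.sum_congr rfl fun j _ => Finset.sum_congr rfl fun l _ => by ring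
      rw [h2, htrace k, hgg] at h1
      have h3 : ∑ j : Fin n, dφ j * (∑ l, ginv j l * g k l) = dφ k := by
        have : ∀ j : Fin n, dφ j * (∑ l, ginv j l * g k l)
            = if j = k then dφ j else 0 := by
          intro j
          rw [hdel2 j k]
          split <;> simp
        rw [Finset.sum_congr rfl fun j _ => this j]
        simp
      rw [h3] at h1
      linarith
    field_simp
    linarith [key]
  intro k j l
  have hc := hcodazzi k j l
  have : dRic k j l - dRic j k l = dφ j * g k l - dφ k * g j l := by linarith
  rw [this, hφ j, hφ k]
  field_simp
  ring
end

section
/- Let (M,g) be a Riemannian manifold of dimension n > 3 whose quasi-conformal curvature tensor W_{jkl}{}^m = −(n−2)b·C_{jkl}{}^m + [a+(n−2)b]·C̃_{jkl}{}^m (a, b nonzero constants) is divergence-free: ∇_m W_{jkl}{}^m = 0. Then either a + b(n−2) = 0 (so W is proportional to the conformal tensor C) or the scalar curvature R is constant. -/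
/-- Equation (condQCH) of Section 3: if the quasi-conformal curvature tensor
`W = −(n−2)b·C + (a+(n−2)b)·C̃` is divergence free, then either
`a + b(n−2) = 0` or the scalar curvature is constant (`∇R = 0`).
Tensor components at a point; the standard divergence formulas for `C` and
`C̃`, the contracted second Bianchi identity and the trace identities are
hypotheses. -/
theorem stmt_9 {n : ℕ} (hn : 3 < n) (a b : ℝ) (ha : a ≠ 0) (hb : b ≠ 0)
    (g ginv : Fin n → Fin n → ℝ)
    (hgsym : ∀ i j, g i j = g j i) (hginvsym : ∀ i j, ginv i j = ginv j i)
    (hdelta : ∀ i k, ∑ j, ginv i j * g j k = if i = k then (1 : ℝ) else 0)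
    (dRic : Fin n → Fin n → Fin n → ℝ) (dR : Fin n → ℝ)
    (divRiem divC divCt divW : Fin n → Fin n → Fin n → ℝ)
    (hdivC : ∀ j k l, divC j k l = (((n : ℝ) - 3) / ((n : ℝ) - 2)) *
      (dRic k j l - dRic j k l
        + (1 / (2 * ((n : ℝ) - 1))) * (g k l * dR j - g j l * dR k)))
    (hdivCt : ∀ j k l, divCt j k l = divRiem j k l
      + (1 / ((n : ℝ) * ((n : ℝ) - 1))) * (g k l * dR j - g j l * dR k))
    (hWdef : ∀ j k l, divW j k l = -((n : ℝ) - 2) * b * divC j k l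
      + (a + ((n : ℝ) - 2) * b) * divCt j k l)
    (hbianchi : ∀ j k l, divRiem j k l = dRic k j l - dRic j k l)
    (htrace : ∀ k, ∑ j, ∑ l, ginv j l * dRic k j l = dR k)
    (htrdiv : ∀ k, ∑ j, ∑ l, ginv j l * dRic j k l = dR k / 2)
    (hharm : ∀ j k l, divW j k l = 0) :
    a + b * ((n : ℝ) - 2) = 0 ∨ ∀ l, dR l = 0 := by
  by_cases hab : a + b * ((n : ℝ) - 2) = 0
  · exact Or.inl hab
  · right
    intro k
    have hn3 : (3 : ℝ) < (n : ℝ) := by exact_mod_cast hn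
    have hn0 : (n : ℝ) ≠ 0 := by linarith
    have hn1 : ((n : ℝ) - 1) ≠ 0 := by linarith
    have hn2 : ((n : ℝ) - 2) ≠ 0 := by linarith
    set A : ℝ := -((n : ℝ) - 2) * b * (((n : ℝ) - 3) / ((n : ℝ) - 2))
      + (a + ((n : ℝ) - 2) * b) with hA
    set B : ℝ := -((n : ℝ) - 2) * b * (((n : ℝ) - 3) / ((n : ℝ) - 2))
        * (1 / (2 * ((n : ℝ) - 1)))
      + (a + ((n : ℝ) - 2) * b) * (1 / ((n : ℝ) * ((n : ℝ) - 1))) with hB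
    have hW : ∀ j l, divW j k l
        = A * (dRic k j l - dRic j k l) + B * (g k l * dR j - g j l * dR k) := by
      intro j l
      rw [hWdef, hdivC, hdivCt, hbianchi, hA, hB]
      ring
    have S3 : ∑ j, ∑ l, ginv j l * (g k l * dR j) = dR k := by
      have h1 : ∀ j, ∑ l, ginv j l * (g k l * dR j)
          = (∑ l, ginv j l * g l k) * dR j := by
        intro j
        rw [Finset.sum_mul]
        exact Finset.sum_congr rfl fun l _ => by rw [hgsym k l]; ring
      calc ∑ j, ∑ l, ginv j l * (g k l * dR j)
          = ∑ j, (if j = k then (1:ℝ) else 0) * dR j := by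
            refine Finset.sum_congr rfl fun j _ => ?_
            rw [h1 j, hdelta j k]
        _ = dR k := by simp
    have S4 : ∑ j, ∑ l, ginv j l * (g j l * dR k) = (n : ℝ) * dR k := by
      have h1 : ∀ j : Fin n, ∑ l, ginv j l * (g j l * dR k) = dR k := by
        intro j
        have : ∑ l, ginv j l * (g j l * dR k)
            = (∑ l, ginv j l * g l j) * dR k := by
          rw [Finset.sum_mul]
          exact Finset.sum_congr rfl fun l _ => by rw [hgsym j l]; ring
        rw [this, hdelta j j]
        simp
      rw [Finset.sum_congr rfl fun j _ => h1 j]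
      simp [mul_comm]
    have main : (0 : ℝ) = A * (dR k / 2) + B * (dR k - (n : ℝ) * dR k) := by
      have h0 : (0 : ℝ) = ∑ j, ∑ l, ginv j l * divW j k l := by
        simp [hharm]
      calc (0 : ℝ) = ∑ j, ∑ l, ginv j l * divW j k l := h0
        _ = ∑ j, ∑ l, (A * (ginv j l * dRic k j l) - A * (ginv j l * dRic j k l)
              + (B * (ginv j l * (g k l * dR j)) - B * (ginv j l * (g j l * dR k)))) := by
            refine Finset.sum_congr rfl fun j _ => Finset.sum_congr rfl fun l _ => ?_
            rw [hW j l]; ring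
        _ = A * (∑ j, ∑ l, ginv j l * dRic k j l)
              - A * (∑ j, ∑ l, ginv j l * dRic j k l)
              + (B * (∑ j, ∑ l, ginv j l * (g k l * dR j))
              - B * (∑ j, ∑ l, ginv j l * (g j l * dR k))) := by
            simp only [Finset.sum_add_distrib, Finset.sum_sub_distrib, ← Finset.mul_sum]
        _ = A * (dR k / 2) + B * (dR k - (n : ℝ) * dR k) := by
            rw [htrace k, htrdiv k, S3, S4]; ring
    have hfactor : A / 2 + (1 - (n : ℝ)) * B
        = (a + b * ((n : ℝ) - 2)) * (((n : ℝ) - 2) / (2 * (n : ℝ))) := by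
      rw [hA, hB]
      field_simp
      ring
    have hcoef : (a + b * ((n : ℝ) - 2)) * (((n : ℝ) - 2) / (2 * (n : ℝ))) ≠ 0 := by
      apply mul_ne_zero hab
      positivity
    have hmain2 : ((a + b * ((n : ℝ) - 2)) * (((n : ℝ) - 2) / (2 * (n : ℝ)))) * dR k = 0 := by
      rw [← hfactor]
      linarith [main]
    exact (mul_eq_zero.mp hmain2).resolve_left hcoef
end
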